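/- arXiv:1302.3290 — 2 statements merged into one kernel-verified Lean document; each statement's English description precedes it below -/
import Mathlib

section
/- A filtering operator p on the product-of-powersets abstract domain associated with a constraint c computes domain-consistency (hyper-arc consistency) if and only if p equals α_arc ∘ f_c ∘ γ_arc, where f_c is the exact filtering operator of c, α_arc is coordinate-wise projection, and γ_arc is the Cartesian product. -/
/-- Coordinatewise projections of a set of tuples. -/
def alphaArc {n : ℕ} (S : Set (Fin n → ℤ)) : Fin n → Set ℤ :=
  fun i => (fun s => s i) '' S

/-- Cartesian product of a tuple of domains. -/
def gammaArc {n : ℕ} (A : Fin n → Set ℤ) : Set (Fin n → ℤ) :=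
  {s | ∀ i, s i ∈ A i}

/-- Exact filtering operator of a constraint `c`. -/
def exactFilter {n : ℕ} (c : (Fin n → ℤ) → Prop) (S : Set (Fin n → ℤ)) :
    Set (Fin n → ℤ) := {s ∈ S | c s}

/-- A tuple of domains is domain-consistent (hyper-arc consistent) for `c` iff
every value of every component domain extends to a solution of `c` whose other
coordinates lie in the corresponding domains. -/
def DomainConsistent {n : ℕ} (c : (Fin n → ℤ) → Prop) (A : Fin n → Set ℤ) : Prop :=
  ∀ i : Fin n, ∀ d ∈ A i, ∃ s : Fin n → ℤ, c s ∧ s i = d ∧ ∀ j, s j ∈ A j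

/-- A filtering operator `p` for a constraint `c` (monotone, contracting, and
removing no solutions) computes domain-consistency — i.e., always returns the
greatest domain-consistent tuple contained in its input — iff
`p = α_arc ∘ f_c ∘ γ_arc`. -/
theorem domain_consistency_iff {n : ℕ} (c : (Fin n → ℤ) → Prop)
    (p : (Fin n → Set ℤ) → (Fin n → Set ℤ))
    (hmono : Monotone p)
    (hcontract : ∀ A, p A ≤ A)
    (hnoloss : ∀ A (s : Fin n → ℤ), c s → (∀ i, s i ∈ A i) → ∀ i, s i ∈ p A i) :
    (∀ A, IsGreatest {B | B ≤ A ∧ DomainConsistent c B} (p A)) ↔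
      p = fun A => alphaArc (exactFilter c (gammaArc A)) := by
  have hq : ∀ A, IsGreatest {B | B ≤ A ∧ DomainConsistent c B}
      (alphaArc (exactFilter c (gammaArc A))) := by
    intro A
    constructor
    · constructor
      · intro i d hd
        obtain ⟨s, ⟨hs, _⟩, rfl⟩ := hd
        exact hs i
      · intro i d hd
        obtain ⟨s, ⟨hs, hcs⟩, rfl⟩ := hd
        exact ⟨s, hcs, rfl, fun j => ⟨s, ⟨hs, hcs⟩, rfl⟩⟩
    · rintro B ⟨hBA, hBC⟩ i d hd
      obtain ⟨s, hcs, hsi, hsj⟩ := hBC i d hd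
      exact ⟨s, ⟨fun j => hBA j (hsj j), hcs⟩, hsi⟩
  constructor
  · intro h
    funext A
    exact (h A).unique (hq A)
  · intro h A
    rw [h]
    exact hq A
end

section
/- If f♯_arc is the composition of the domain-consistency operators of the constraints c₁,…,cₘ, and f_C is the composition of their exact filtering operators, then the solution set of the constraint system, which equals gfp(f_C), is contained in γ_arc(gfp(f♯_arc)). -/
/-- Composition `g₁ ∘ ⋯ ∘ gₘ` of a list of operators. -/
def compList {α : Type*} (fs : List (α → α)) : α → α := fs.foldr (· ∘ ·) id

theorem compList_map_sep {α ι : Type*} (p : ι → α → Prop) (L : List ι) (S : Set α) :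
    compList (L.map fun i T => {s ∈ T | p i s}) S = {s ∈ S | ∀ i ∈ L, p i s} := by
  induction L generalizing S with
  | nil => simp [compList]
  | cons a L ih =>
    change {s ∈ compList _ S | p a s} = _
    rw [ih]
    ext s
    simp only [Set.mem_ofPred_eq, List.mem_cons, forall_eq_or_imp]
    tauto

theorem le_compList_self {α : Type*} [Preorder α] {a : α} {L : List (α → α)}
    (h : ∀ g ∈ L, Monotone g ∧ a ≤ g a) : a ≤ compList L a := by
  induction L with
  | nil => exact le_rfl
  | cons g L ih =>
    obtain ⟨hmono, hle⟩ := h g List.mem_cons_self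
    exact hle.trans (hmono (ih fun g' hg' => h g' (List.mem_cons_of_mem _ hg')))

theorem sSup_setOf_subset_sep {α : Type*} (P : α → Prop) :
    sSup {S : Set α | S ≤ {s ∈ S | P s}} = {s | P s} :=
  le_antisymm (sSup_le fun _ hS _ hs => (hS hs).2) (le_sSup fun _ hs => ⟨hs, hs⟩)

theorem gc_alphaArc_gammaArc {n : ℕ} : GaloisConnection (alphaArc (n := n)) gammaArc := by
  intro S A
  simp only [Pi.le_def, alphaArc, gammaArc, Set.subset_def,
    Set.forall_mem_image, Set.mem_ofPred_eq]
  exact ⟨fun h s hs i => h i hs, fun h i s hs => h s hs i⟩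

theorem GaloisConnection.l_le_l_comp_comp_u_of_le {α β : Type*} [Preorder α] [Preorder β]
    {l : α → β} {u : β → α} (gc : GaloisConnection l u) {f : α → α} (hf : Monotone f)
    {x : α} (hx : x ≤ f x) : l x ≤ l (f (u (l x))) :=
  gc.monotone_l (hx.trans (hf (gc.le_u_l x)))

/-- `sol(C) = gfp(f_C) ⊆ γ_arc(gfp(f♯_arc))`: the solution set of the
constraint system equals the greatest fixed point of the composition of the
exact filtering operators, and is contained in the concretization of the
greatest fixed point of the composition of the domain-consistency operators
`f♯_{i_arc} = α_arc ∘ f_i ∘ γ_arc`. -/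
theorem sol_eq_gfp_subset_gamma_gfp_arc {n m : ℕ} (c : Fin m → (Fin n → ℤ) → Prop)
    (f : Fin m → Set (Fin n → ℤ) → Set (Fin n → ℤ))
    (hf : ∀ i, f i = fun S => {s ∈ S | c i s})
    (fC : Set (Fin n → ℤ) → Set (Fin n → ℤ))
    (hfC : fC = compList (List.ofFn f))
    (farc : (Fin n → Set ℤ) → (Fin n → Set ℤ))
    (hfarc : farc = compList (List.ofFn fun i => fun A => alphaArc (f i (gammaArc A)))) :
    {s : Fin n → ℤ | ∀ i, c i s} = sSup {S | S ≤ fC S} ∧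
    sSup {S | S ≤ fC S} ⊆ gammaArc (sSup {A | A ≤ farc A}) := by
  have hfC' : ∀ S, fC S = {s ∈ S | ∀ i, c i s} := by
    intro S
    rw [hfC, funext hf, List.ofFn_eq_map, compList_map_sep]
    simp
  have hgfp : sSup {S | S ≤ fC S} = {s | ∀ i, c i s} := by
    simp_rw [hfC']
    exact sSup_setOf_subset_sep _
  refine ⟨hgfp.symm, ?_⟩
  have gc := gc_alphaArc_gammaArc (n := n)
  rw [hgfp, ← gc.le_iff_le]
  apply le_sSup
  rw [Set.mem_ofPred_eq, hfarc]
  refine le_compList_self fun g hg => ?_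
  obtain ⟨i, rfl⟩ := List.mem_ofFn.1 hg
  have hfi : Monotone (f i) := by
    rw [hf i]
    exact fun S T hST s hs => ⟨hST hs.1, hs.2⟩
  refine ⟨gc.monotone_l.comp (hfi.comp gc.monotone_u), gc.l_le_l_comp_comp_u_of_le hfi ?_⟩
  rw [hf i]
  exact fun s hs => ⟨hs, hs i⟩
end
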